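/- arXiv:2507.12779 — 4 statements merged into one kernel-verified Lean document; each statement's English description precedes it below -/
import Mathlib

section
/- The function G(v) := φ(v)·F(v) + ∫_v^{v̄} φ(s)·f(s) ds is strictly increasing on V, and it satisfies G(v̲) = v̲ and G(v̄) = v̄. -/
open Set MeasureTheory

/-- The virtual value function `φ(v) = v - (1 - F v) / f v`. -/
noncomputable def phi (F f : ℝ → ℝ) (v : ℝ) : ℝ := v - (1 - F v) / f v

/-- The function `G(v) = φ(v)·F(v) + ∫_v^{v̄} φ(s)·f(s) ds`. -/
noncomputable def Gfun (F f : ℝ → ℝ) (vhi : ℝ) (v : ℝ) : ℝ :=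
  phi F f v * F v + ∫ s in v..vhi, phi F f s * f s

/-!
Since `φ f = s f + F - 1` is the derivative of `s ↦ s (F s - 1)`, the integral in `G` is
`v (1 - F v)`, which gives the boundary values. For `w < v`,
`G v - G w = φ v F v - φ w F w - ∫_w^v φ f`, and as `φ` is strictly increasing the integral is
strictly less than `φ v (F v - F w)`; hence `G v - G w > (φ v - φ w) F w ≥ 0`.
-/

theorem intervalIntegral.integral_mul_lt_mul_integral_of_strictMonoOn {g h : ℝ → ℝ}
    {a b : ℝ} (hab : a < b) (hg : StrictMonoOn g (Icc a b)) (hgc : ContinuousOn g (Icc a b))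
    (hhc : ContinuousOn h (Icc a b)) (hh : ∀ x ∈ Icc a b, 0 < h x) :
    ∫ x in a..b, g x * h x < g b * ∫ x in a..b, h x := by
  have ha : a ∈ Icc a b := left_mem_Icc.2 hab.le
  have hb : b ∈ Icc a b := right_mem_Icc.2 hab.le
  rw [← intervalIntegral.integral_const_mul]
  refine intervalIntegral.integral_lt_integral_of_continuousOn_of_le_of_exists_lt hab
    (hgc.mul hhc) (continuousOn_const.mul hhc) (fun x hx => ?_)
    ⟨a, ha, ?_⟩
  · have hx' : x ∈ Icc a b := Ioc_subset_Icc_self hx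
    exact mul_le_mul_of_nonneg_right (hg.monotoneOn hx' hb hx.2) (hh x hx').le
  · exact mul_lt_mul_of_pos_right (hg ha hb hab) (hh a ha)

section VirtualValue

variable {F f : ℝ → ℝ} {a b : ℝ}

theorem continuousOn_phi {s : Set ℝ} (hF : ContinuousOn F s) (hf : ContinuousOn f s)
    (hf0 : ∀ x ∈ s, f x ≠ 0) : ContinuousOn (phi F f) s :=
  continuousOn_id.sub ((continuousOn_const.sub hF).div hf hf0)

theorem hasDerivAt_mul_sub_one_phi_mul {x : ℝ} (hF : HasDerivAt F (f x) x) (hf0 : f x ≠ 0) :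
    HasDerivAt (fun s => s * (F s - 1)) (phi F f x * f x) x := by
  refine ((hasDerivAt_id' x).mul (hF.sub_const 1)).congr_deriv ?_
  rw [phi]
  field_simp
  ring

theorem intervalIntegrable_phi_mul (hF : ∀ x ∈ Icc a b, HasDerivAt F (f x) x)
    (hf : ContinuousOn f (Icc a b)) (hf0 : ∀ x ∈ Icc a b, f x ≠ 0) {w v : ℝ}
    (hw : w ∈ Icc a b) (hv : v ∈ Icc a b) :
    IntervalIntegrable (fun s => phi F f s * f s) volume w v :=
  (((continuousOn_phi (HasDerivAt.continuousOn hF) hf hf0).mul hf).mono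
    (uIcc_subset_Icc hw hv)).intervalIntegrable

theorem integral_phi_mul (hF : ∀ x ∈ Icc a b, HasDerivAt F (f x) x)
    (hf : ContinuousOn f (Icc a b)) (hf0 : ∀ x ∈ Icc a b, f x ≠ 0) (hab : a ≤ b) :
    ∫ s in a..b, phi F f s * f s = b * (F b - 1) - a * (F a - 1) :=
  intervalIntegral.integral_eq_sub_of_hasDerivAt
    (fun x hx => hasDerivAt_mul_sub_one_phi_mul (hF x (uIcc_of_le hab ▸ hx))
      (hf0 x (uIcc_of_le hab ▸ hx)))
    (intervalIntegrable_phi_mul hF hf hf0 (left_mem_Icc.2 hab) (right_mem_Icc.2 hab))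

theorem Gfun_sub_Gfun (hF : ∀ x ∈ Icc a b, HasDerivAt F (f x) x)
    (hf : ContinuousOn f (Icc a b)) (hf0 : ∀ x ∈ Icc a b, f x ≠ 0) {w v : ℝ}
    (hw : w ∈ Icc a b) (hv : v ∈ Icc a b) :
    Gfun F f b v - Gfun F f b w =
      phi F f v * F v - phi F f w * F w - ∫ s in w..v, phi F f s * f s := by
  have hb : b ∈ Icc a b := right_mem_Icc.2 (hw.1.trans hw.2)
  rw [Gfun, Gfun, ← intervalIntegral.integral_interval_sub_left
    (intervalIntegrable_phi_mul hF hf hf0 hw hb) (intervalIntegrable_phi_mul hF hf hf0 hw hv)]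
  ring

theorem strictMonoOn_Gfun (hF : ∀ x ∈ Icc a b, HasDerivAt F (f x) x)
    (hf : ContinuousOn f (Icc a b)) (hf0 : ∀ x ∈ Icc a b, 0 < f x)
    (hF0 : ∀ x ∈ Icc a b, 0 ≤ F x) (hreg : StrictMonoOn (phi F f) (Icc a b)) :
    StrictMonoOn (Gfun F f b) (Icc a b) := by
  intro w hw v hv hwv
  have hf0' : ∀ x ∈ Icc a b, f x ≠ 0 := fun x hx => (hf0 x hx).ne'
  have hsub : Icc w v ⊆ Icc a b := Icc_subset_Icc hw.1 hv.2
  have hint_f : ∫ s in w..v, f s = F v - F w :=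
    intervalIntegral.integral_eq_sub_of_hasDerivAt
      (fun x hx => hF x (hsub (uIcc_of_le hwv.le ▸ hx)))
      ((hf.mono hsub).intervalIntegrable_of_Icc hwv.le)
  have hint_lt : ∫ s in w..v, phi F f s * f s < phi F f v * (F v - F w) := by
    rw [← hint_f]
    exact intervalIntegral.integral_mul_lt_mul_integral_of_strictMonoOn hwv (hreg.mono hsub)
      ((continuousOn_phi (HasDerivAt.continuousOn hF) hf hf0').mono hsub) (hf.mono hsub)
      fun x hx => hf0 x (hsub hx)
  have hgap : 0 ≤ (phi F f v - phi F f w) * F w :=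
    mul_nonneg (sub_nonneg.2 (hreg hw hv hwv).le) (hF0 w hw)
  linarith [Gfun_sub_Gfun hF hf hf0' hw hv]

theorem Gfun_left (hF : ∀ x ∈ Icc a b, HasDerivAt F (f x) x)
    (hf : ContinuousOn f (Icc a b)) (hf0 : ∀ x ∈ Icc a b, f x ≠ 0) (hab : a ≤ b)
    (hFa : F a = 0) (hFb : F b = 1) : Gfun F f b a = a := by
  rw [Gfun, integral_phi_mul hF hf hf0 hab, hFa, hFb]
  ring

theorem Gfun_self (hFb : F b = 1) : Gfun F f b b = b := by
  simp [Gfun, phi, hFb]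

end VirtualValue

theorem stmt_0_general
    (vlo vhi : ℝ) (hlt : vlo < vhi)
    (F f : ℝ → ℝ) (hFmono : Monotone F)
    (hFlo : F vlo = 0) (hFhi : F vhi = 1)
    (hFderiv : ∀ v ∈ Set.Icc vlo vhi, HasDerivAt F (f v) v)
    (hfpos : ∀ v ∈ Set.Icc vlo vhi, 0 < f v)
    (hfdiff : DifferentiableOn ℝ f (Set.Icc vlo vhi))
    (hreg : StrictMonoOn (phi F f) (Set.Icc vlo vhi)) :
    StrictMonoOn (Gfun F f vhi) (Set.Icc vlo vhi) ∧
      Gfun F f vhi vlo = vlo ∧ Gfun F f vhi vhi = vhi :=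
  ⟨strictMonoOn_Gfun hFderiv hfdiff.continuousOn hfpos (fun _ hx => hFlo ▸ hFmono hx.1) hreg,
    Gfun_left hFderiv hfdiff.continuousOn (fun v hv => (hfpos v hv).ne') hlt.le hFlo hFhi,
    Gfun_self hFhi⟩

/-- `G` is strictly increasing on `V = [v̲, v̄]`, with
`G(v̲) = v̲` and `G(v̄) = v̄`. -/
theorem stmt_0
    (vlo vhi : ℝ) (hvlo : 0 ≤ vlo) (hlt : vlo < vhi)
    (F f : ℝ → ℝ) (hFmono : Monotone F)
    (hFlo : F vlo = 0) (hFhi : F vhi = 1)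
    (hFderiv : ∀ v ∈ Set.Icc vlo vhi, HasDerivAt F (f v) v)
    (hfpos : ∀ v ∈ Set.Icc vlo vhi, 0 < f v)
    (hfdiff : DifferentiableOn ℝ f (Set.Icc vlo vhi))
    (hreg : StrictMonoOn (phi F f) (Set.Icc vlo vhi)) :
    StrictMonoOn (Gfun F f vhi) (Set.Icc vlo vhi) ∧
      Gfun F f vhi vlo = vlo ∧ Gfun F f vhi vhi = vhi :=
  stmt_0_general vlo vhi hlt F f hFmono hFlo hFhi hFderiv hfpos hfdiff hreg
end

section
/- For all capacities k', k'' ∈ (0,1) with k' < k'' and every type v ∈ V with v ≤ ϑ(k'), the consumer surplus is nondecreasing in capacity: U(v, k') ≤ U(v, k''). In particular, low-value consumers who rely on the public option weakly benefit from any expansion of the public option's capacity. -/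
open Set MeasureTheory

/-- Consumer surplus in the mixed market: `U(v,k) = π(k)·v` if `v < ϑ(k)` and
`U(v,k) = v − p(k)` if `v ≥ ϑ(k)`, where `π(k) = k/F(ϑ(k))` and
`p(k) = ϑ(k)·(1 − π(k))`. -/
noncomputable def Ucs (F θ : ℝ → ℝ) (v k : ℝ) : ℝ :=
  if v < θ k then (k / F (θ k)) * v else v - θ k * (1 - k / F (θ k))

/-!
Dividing the first-order condition `k·G(ϑ) = φ(ϑ)·F(ϑ)²` by `F(ϑ)·G(ϑ)` shows that the rationing
probability `π(k) = k / F(ϑ(k))` is the value at `ϑ(k)` of `φF / G = φF / (φF + ∫_v^{v̄} φ f)`.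
Above `vᴹ` the numerator `φF` is nonnegative and nondecreasing while the tail integral is nonnegative
and nonincreasing, so this share is nondecreasing. Hence `ϑ` is strictly increasing in capacity
(otherwise `k = π(k)·F(ϑ(k))` could not increase), and `π` is nondecreasing. A type `v ≤ ϑ(k')` gets
`U(v, ·) = π(·)·v` at both capacities, and the claim follows from `v ≥ 0`.
-/

noncomputable def rationingShare (F f : ℝ → ℝ) (vhi v : ℝ) : ℝ :=
  phi F f v * F v / Gfun F f vhi v

lemma div_add_le_div_add {x x' y y' : ℝ} (hx : 0 ≤ x) (hxx' : x ≤ x') (hy' : 0 ≤ y')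
    (hy'y : y' ≤ y) : x / (x + y) ≤ x' / (x' + y') := by
  rcases hx.eq_or_lt with rfl | hx
  · simp only [zero_div]
    exact div_nonneg (by linarith) (by linarith)
  · rw [div_le_div_iff₀ (by linarith) (by linarith)]
    nlinarith

lemma Ucs_eq_of_le {F θ : ℝ → ℝ} {v k : ℝ} (hv : v ≤ θ k) :
    Ucs F θ v k = k / F (θ k) * v := by
  unfold Ucs
  split_ifs with h
  · rfl
  · rw [le_antisymm hv (not_lt.1 h)]
    ring

lemma lt_of_monotoneOn_of_eq_div {s F : ℝ → ℝ} {S : Set ℝ} {x y k l : ℝ}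
    (hs : MonotoneOn s S) (hF : MonotoneOn F S) (hx : x ∈ S) (hy : y ∈ S)
    (hFx : 0 < F x) (hFy : 0 < F y) (hsx : s x = k / F x) (hsy : s y = l / F y)
    (hk : 0 ≤ k) (hkl : k < l) : x < y := by
  by_contra! hyx
  have hs_le : l / F y ≤ k / F x := hsy ▸ hsx ▸ hs hy hx hyx
  have hl_le : l ≤ k :=
    calc l = l / F y * F y := (div_mul_cancel₀ _ hFy.ne').symm
      _ ≤ k / F x * F x := mul_le_mul hs_le (hF hy hx hyx) hFy.le (div_nonneg hk hFx.le)
      _ = k := div_mul_cancel₀ _ hFx.ne'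
  linarith

section Share

variable {F f : ℝ → ℝ}

lemma continuousOn_phi_mul {s : Set ℝ} (hF : ContinuousOn F s) (hf : ContinuousOn f s)
    (hf0 : ∀ v ∈ s, f v ≠ 0) : ContinuousOn (fun v => phi F f v * f v) s :=
  (continuousOn_id.sub ((continuousOn_const.sub hF).div hf hf0)).mul hf

lemma rationingShare_eq_of_foc {b k v : ℝ} (hφ : phi F f v ≠ 0) (hF : F v ≠ 0)
    (hfoc : k * Gfun F f b v = phi F f v * F v ^ 2) :
    rationingShare F f b v = k / F v := by
  have hG : Gfun F f b v ≠ 0 := by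
    intro hG
    rw [hG, mul_zero] at hfoc
    exact mul_ne_zero hφ (pow_ne_zero 2 hF) hfoc.symm
  rw [rationingShare, div_eq_div_iff hG hF]
  linear_combination -hfoc

lemma monotoneOn_rationingShare {a b : ℝ} (hφ : MonotoneOn (phi F f) (Icc a b))
    (hφa : 0 ≤ phi F f a) (hF : MonotoneOn F (Icc a b)) (hFa : 0 ≤ F a)
    (hf : ∀ v ∈ Icc a b, 0 ≤ f v) (hcont : ContinuousOn (fun v => phi F f v * f v) (Icc a b)) :
    MonotoneOn (rationingShare F f b) (Icc a b) := by
  have hφ_nonneg : ∀ v ∈ Icc a b, 0 ≤ phi F f v :=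
    fun v hv => hφa.trans (hφ (left_mem_Icc.2 (hv.1.trans hv.2)) hv hv.1)
  have hF_nonneg : ∀ v ∈ Icc a b, 0 ≤ F v :=
    fun v hv => hFa.trans (hF (left_mem_Icc.2 (hv.1.trans hv.2)) hv hv.1)
  intro u hu w hw huw
  have hsub : Icc u b ⊆ Icc a b := Icc_subset_Icc hu.1 le_rfl
  refine div_add_le_div_add (mul_nonneg (hφ_nonneg u hu) (hF_nonneg u hu))
    (mul_le_mul (hφ hu hw huw) (hF hu hw huw) (hF_nonneg u hu) (hφ_nonneg w hw)) ?_ ?_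
  · exact intervalIntegral.integral_nonneg hw.2 fun s hs =>
      mul_nonneg (hφ_nonneg s ⟨hw.1.trans hs.1, hs.2⟩) (hf s ⟨hw.1.trans hs.1, hs.2⟩)
  · refine intervalIntegral.integral_mono_interval huw hw.2 le_rfl ?_
      ((hcont.mono hsub).intervalIntegrable_of_Icc hu.2)
    filter_upwards [ae_restrict_mem measurableSet_Ioc] with s hs
    exact mul_nonneg (hφ_nonneg s ⟨hu.1.trans hs.1.le, hs.2⟩) (hf s ⟨hu.1.trans hs.1.le, hs.2⟩)

end Share

theorem stmt_13_general
    (vlo vhi : ℝ) (hvlo : 0 ≤ vlo)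
    (F f : ℝ → ℝ) (hFmono : Monotone F)
    (hFlo : F vlo = 0)
    (hFderiv : ∀ v ∈ Set.Icc vlo vhi, HasDerivAt F (f v) v)
    (hfpos : ∀ v ∈ Set.Icc vlo vhi, 0 < f v)
    (hfdiff : DifferentiableOn ℝ f (Set.Icc vlo vhi))
    (hreg : StrictMonoOn (phi F f) (Set.Icc vlo vhi))
    (vM : ℝ) (hvM : IsLeast {v ∈ Set.Icc vlo vhi | 0 ≤ phi F f v} vM)
    (FInv : ℝ → ℝ)
    (hFInv : ∀ k ∈ Set.Ioo (0:ℝ) 1, FInv k ∈ Set.Icc vlo vhi ∧ F (FInv k) = k)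
    (θ : ℝ → ℝ)
    (hθ : ∀ k ∈ Set.Ioo (0:ℝ) 1, θ k ∈ Set.Icc vlo vhi ∧
      k * Gfun F f vhi (θ k) = phi F f (θ k) * (F (θ k)) ^ 2)
    (hθloc : ∀ k ∈ Set.Ioo (0:ℝ) 1, θ k ∈ Set.Ioo (max vM (FInv k)) vhi)
    :
    ∀ k' ∈ Set.Ioo (0:ℝ) 1, ∀ k'' ∈ Set.Ioo (0:ℝ) 1, k' < k'' →
      ∀ v ∈ Set.Icc vlo vhi, v ≤ θ k' →
        Ucs F θ v k' ≤ Ucs F θ v k'' := by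
  have hvM_mem : vM ∈ Icc vlo vhi := hvM.1.1
  have hsub : Icc vM vhi ⊆ Icc vlo vhi := Icc_subset_Icc hvM_mem.1 le_rfl
  have hshare : MonotoneOn (rationingShare F f vhi) (Icc vM vhi) :=
    monotoneOn_rationingShare (hreg.monotoneOn.mono hsub) hvM.1.2 (hFmono.monotoneOn _)
      (hFlo ▸ hFmono hvM_mem.1) (fun v hv => (hfpos v (hsub hv)).le)
      (continuousOn_phi_mul (fun v hv => (hFderiv v hv).continuousAt.continuousWithinAt)
        hfdiff.continuousOn (fun v hv => (hfpos v hv).ne') |>.mono hsub)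
  have hθ_spec : ∀ k ∈ Ioo (0:ℝ) 1, θ k ∈ Icc vM vhi ∧ 0 < F (θ k) ∧
      rationingShare F f vhi (θ k) = k / F (θ k) := by
    intro k hk
    obtain ⟨hθ_mem, hfoc⟩ := hθ k hk
    obtain ⟨hθ_lo, hθ_hi⟩ := hθloc k hk
    have hFθ : 0 < F (θ k) :=
      calc 0 < k := hk.1
        _ = F (FInv k) := (hFInv k hk).2.symm
        _ ≤ F (θ k) := hFmono (le_of_max_le_right hθ_lo.le)
    have hφθ : 0 < phi F f (θ k) :=
      hvM.1.2.trans_lt (hreg hvM_mem hθ_mem ((le_max_left _ _).trans_lt hθ_lo))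
    exact ⟨⟨(le_max_left _ _).trans hθ_lo.le, hθ_hi.le⟩, hFθ,
      rationingShare_eq_of_foc hφθ.ne' hFθ.ne' hfoc⟩
  intro k' hk' k'' hk'' hkk v hv hvθ
  obtain ⟨hθ'_mem, hF', hshare'⟩ := hθ_spec k' hk'
  obtain ⟨hθ''_mem, hF'', hshare''⟩ := hθ_spec k'' hk''
  have hθ_lt : θ k' < θ k'' := lt_of_monotoneOn_of_eq_div hshare (hFmono.monotoneOn _)
    hθ'_mem hθ''_mem hF' hF'' hshare' hshare'' hk'.1.le hkk
  have hπ_le : k' / F (θ k') ≤ k'' / F (θ k'') :=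
    hshare' ▸ hshare'' ▸ hshare hθ'_mem hθ''_mem hθ_lt.le
  rw [Ucs_eq_of_le hvθ, Ucs_eq_of_le (hvθ.trans hθ_lt.le)]
  exact mul_le_mul_of_nonneg_right hπ_le (hvlo.trans hv.1)

/-- for capacities `k' < k''` in `(0,1)` and every type `v ∈ V` with
`v ≤ ϑ(k')`, consumer surplus is nondecreasing in capacity: `U(v,k') ≤ U(v,k'')`. -/
theorem stmt_13
    (vlo vhi : ℝ) (hvlo : 0 ≤ vlo) (hlt : vlo < vhi)
    (F f : ℝ → ℝ) (hFmono : Monotone F)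
    (hFlo : F vlo = 0) (hFhi : F vhi = 1)
    (hFderiv : ∀ v ∈ Set.Icc vlo vhi, HasDerivAt F (f v) v)
    (hfpos : ∀ v ∈ Set.Icc vlo vhi, 0 < f v)
    (hfdiff : DifferentiableOn ℝ f (Set.Icc vlo vhi))
    (hreg : StrictMonoOn (phi F f) (Set.Icc vlo vhi))
    (vM : ℝ) (hvM : IsLeast {v ∈ Set.Icc vlo vhi | 0 ≤ phi F f v} vM)
    (FInv : ℝ → ℝ)
    (hFInv : ∀ k ∈ Set.Ioo (0:ℝ) 1, FInv k ∈ Set.Icc vlo vhi ∧ F (FInv k) = k)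
    (θ : ℝ → ℝ)
    (hθ : ∀ k ∈ Set.Ioo (0:ℝ) 1, θ k ∈ Set.Icc vlo vhi ∧
      k * Gfun F f vhi (θ k) = phi F f (θ k) * (F (θ k)) ^ 2)
    (hθuniq : ∀ k ∈ Set.Ioo (0:ℝ) 1, ∀ v ∈ Set.Icc vlo vhi,
      k * Gfun F f vhi v = phi F f v * (F v) ^ 2 → v = θ k)
    (hθloc : ∀ k ∈ Set.Ioo (0:ℝ) 1, θ k ∈ Set.Ioo (max vM (FInv k)) vhi)
    :
    ∀ k' ∈ Set.Ioo (0:ℝ) 1, ∀ k'' ∈ Set.Ioo (0:ℝ) 1, k' < k'' →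
      ∀ v ∈ Set.Icc vlo vhi, v ≤ θ k' →
        Ucs F θ v k' ≤ Ucs F θ v k'' :=
  stmt_13_general vlo vhi hvlo F f hFmono hFlo hFderiv hfpos hfdiff hreg vM hvM FInv hFInv θ hθ
    hθloc
end

section
/- The cutoff map k ↦ ϑ(k) is differentiable on (0,1), hence so is the posted price p(k) := ϑ(k)·(1 − k/F(ϑ(k))); and for every k ∈ (0,1), p'(k) ≤ 0 holds if and only if ϑ(k)·f(ϑ(k))/(1 − F(ϑ(k))) + ϑ(k)·G'(ϑ(k))/G(ϑ(k)) ≥ 2. -/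
/-!
Since `φ f` is the derivative of `-v (1 - F v)`, `G = φ F + v (1 - F)` on `[v̲, v̄]`, hence
`G' = φ' F`. The first-order condition says `κ (ϑ k) = k` for `κ = φ F² / G`. On `(vᴹ, v̄)` the
quotient rule gives `κ' = (φ' F² v (1 - F) + 2 φ F f G) / G² > 0`, regularity supplying `φ' ≥ 0`;
so `ϑ` inverts a strictly increasing map with nonvanishing derivative and is differentiable with
`ϑ' > 0`. Along the first-order condition the price is `p = π ∘ ϑ` with `π v = v² (1 - F v) / G v`,
so `p' ≤ 0` iff `π' (ϑ k) ≤ 0`, which after division by `v (1 - F) G > 0` is the stated inequality.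
-/

open Set MeasureTheory

open Filter Topology

lemma continuousAt_of_leftInvOn_of_strictMonoOn {α β : Type*} [LinearOrder α] [TopologicalSpace α]
    [OrderTopology α] [DenselyOrdered α] [LinearOrder β] [TopologicalSpace β] [OrderTopology β]
    {κ : α → β} {θ : β → α} {s : Set β} {t : Set α} (hκ : StrictMonoOn κ t)
    (hθ : MapsTo θ s t) (hκt : MapsTo κ t s) (hinv : LeftInvOn κ θ s) (hs : IsOpen s)
    (ht : IsOpen t) {k : β} (hk : k ∈ s) : ContinuousAt θ k := by
  have hθmono : StrictMonoOn θ s := fun a ha b hb hab => by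
    by_contra! hba
    have := (hκ.le_iff_le (hθ hb) (hθ ha)).2 hba
    rw [hinv ha, hinv hb] at this
    exact hab.not_ge this
  have himage : t ⊆ θ '' s := fun v hv =>
    ⟨κ v, hκt hv, hκ.injOn (hθ (hκt hv)) hv (hinv (hκt hv))⟩
  exact hθmono.continuousAt_of_image_mem_nhds (hs.mem_nhds hk)
    (mem_of_superset (ht.mem_nhds (hθ hk)) himage)

structure HasPosDifferentiableDensityOn (F f : ℝ → ℝ) (s : Set ℝ) : Prop where
  hasDerivAt : ∀ v ∈ s, HasDerivAt F (f v) v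
  pos : ∀ v ∈ s, 0 < f v
  differentiableOn : DifferentiableOn ℝ f s

namespace HasPosDifferentiableDensityOn

variable {F f : ℝ → ℝ} {s t : Set ℝ} {v : ℝ}

lemma mono (h : HasPosDifferentiableDensityOn F f s) (hts : t ⊆ s) :
    HasPosDifferentiableDensityOn F f t :=
  ⟨fun v hv => h.hasDerivAt v (hts hv), fun v hv => h.pos v (hts hv), h.differentiableOn.mono hts⟩

lemma continuousOn (h : HasPosDifferentiableDensityOn F f s) : ContinuousOn F s :=
  fun v hv => (h.hasDerivAt v hv).continuousAt.continuousWithinAt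

lemma strictMonoOn (h : HasPosDifferentiableDensityOn F f s) (hs : Convex ℝ s) :
    StrictMonoOn F s :=
  strictMonoOn_of_deriv_pos hs h.continuousOn fun v hv =>
    (h.hasDerivAt v (interior_subset hv)).deriv ▸ h.pos v (interior_subset hv)

lemma continuousOn_phi (h : HasPosDifferentiableDensityOn F f s) : ContinuousOn (phi F f) s :=
  continuousOn_id.sub ((continuousOn_const.sub h.continuousOn).div h.differentiableOn.continuousOn
    fun v hv => (h.pos v hv).ne')

lemma differentiableAt_phi (h : HasPosDifferentiableDensityOn F f s) (hs : s ∈ 𝓝 v) :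
    DifferentiableAt ℝ (phi F f) v :=
  differentiableAt_id.sub (((differentiableAt_const _).sub
    (h.hasDerivAt v (mem_of_mem_nhds hs)).differentiableAt).div
      (h.differentiableOn.differentiableAt hs) (h.pos v (mem_of_mem_nhds hs)).ne')

end HasPosDifferentiableDensityOn

section

variable {F f : ℝ → ℝ} {vlo vhi v : ℝ}

lemma phi_mul_eq (hf : f v ≠ 0) : phi F f v * f v = v * f v - (1 - F v) := by
  rw [phi, sub_mul, div_mul_cancel₀ _ hf]

lemma phi_lt_self (hF : F v < 1) (hf : 0 < f v) : phi F f v < v :=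
  sub_lt_self v (div_pos (sub_pos.2 hF) hf)

lemma integral_phi_mul_eq (hd : HasPosDifferentiableDensityOn F f (Icc v vhi)) (hv : v ≤ vhi)
    (hFhi : F vhi = 1) : ∫ s in v..vhi, phi F f s * f s = v * (1 - F v) := by
  have hderiv : ∀ s ∈ uIcc v vhi,
      HasDerivAt (fun t => -(t * (1 - F t))) (phi F f s * f s) s := by
    intro s hs
    rw [uIcc_of_le hv] at hs
    refine ((hasDerivAt_id s).mul ((hd.hasDerivAt s hs).const_sub 1)).neg.congr_deriv ?_
    rw [phi_mul_eq (hd.pos s hs).ne', id]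
    ring
  have hint : IntervalIntegrable (fun s => phi F f s * f s) volume v vhi := by
    apply ContinuousOn.intervalIntegrable
    rw [uIcc_of_le hv]
    exact hd.continuousOn_phi.mul hd.differentiableOn.continuousOn
  rw [intervalIntegral.integral_eq_sub_of_hasDerivAt hderiv hint, hFhi]
  ring

lemma Gfun_eq (hd : HasPosDifferentiableDensityOn F f (Icc vlo vhi)) (hFhi : F vhi = 1)
    (hv : v ∈ Icc vlo vhi) : Gfun F f vhi v = phi F f v * F v + v * (1 - F v) := by
  rw [Gfun, integral_phi_mul_eq (hd.mono (Icc_subset_Icc_left hv.1)) hv.2 hFhi]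

lemma hasDerivAt_Gfun (hd : HasPosDifferentiableDensityOn F f (Icc vlo vhi)) (hFhi : F vhi = 1)
    (hv : v ∈ Ioo vlo vhi) : HasDerivAt (Gfun F f vhi) (deriv (phi F f) v * F v) v := by
  have hv' := Ioo_subset_Icc_self hv
  have hGeq : Gfun F f vhi =ᶠ[𝓝 v] fun w => phi F f w * F w + w * (1 - F w) := by
    filter_upwards [Ioo_mem_nhds hv.1 hv.2] with w hw
    exact Gfun_eq hd hFhi (Ioo_subset_Icc_self hw)
  have hsum := ((hd.differentiableAt_phi (Icc_mem_nhds hv.1 hv.2)).hasDerivAt.mul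
    (hd.hasDerivAt v hv')).add ((hasDerivAt_id v).mul ((hd.hasDerivAt v hv').const_sub 1))
  refine (hsum.congr_of_eventuallyEq hGeq).congr_deriv ?_
  rw [phi_mul_eq (hd.pos v hv').ne', id]
  ring

lemma cdf_mem_Ioo (hd : HasPosDifferentiableDensityOn F f (Icc vlo vhi)) (hFlo : F vlo = 0)
    (hFhi : F vhi = 1) (hv : v ∈ Ioo vlo vhi) : F v ∈ Ioo 0 1 := by
  have hlt : vlo ≤ vhi := (hv.1.trans hv.2).le
  have hF := hd.strictMonoOn (convex_Icc vlo vhi)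
  rw [← hFlo, ← hFhi]
  exact ⟨hF (left_mem_Icc.2 hlt) (Ioo_subset_Icc_self hv) hv.1,
    hF (Ioo_subset_Icc_self hv) (right_mem_Icc.2 hlt) hv.2⟩

lemma pos_of_phi_pos (hd : HasPosDifferentiableDensityOn F f (Icc vlo vhi)) (hFlo : F vlo = 0)
    (hFhi : F vhi = 1) (hv : v ∈ Ioo vlo vhi) (hφ : 0 < phi F f v) : 0 < v :=
  hφ.trans (phi_lt_self (cdf_mem_Ioo hd hFlo hFhi hv).2 (hd.pos v (Ioo_subset_Icc_self hv)))

lemma Gfun_pos (hd : HasPosDifferentiableDensityOn F f (Icc vlo vhi)) (hFlo : F vlo = 0)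
    (hFhi : F vhi = 1) (hv : v ∈ Ioo vlo vhi) (hφ : 0 < phi F f v) : 0 < Gfun F f vhi v := by
  obtain ⟨hF0, hF1⟩ := cdf_mem_Ioo hd hFlo hFhi hv
  have hv0 := pos_of_phi_pos hd hFlo hFhi hv hφ
  rw [Gfun_eq hd hFhi (Ioo_subset_Icc_self hv)]
  have h1F := mul_pos hv0 (sub_pos.2 hF1)
  positivity

/-- The first-order condition `k G(ϑ) = φ(ϑ) F(ϑ)²` reads `cutoffCapacity F f v̄ (ϑ k) = k`. -/
noncomputable def cutoffCapacity (F f : ℝ → ℝ) (vhi v : ℝ) : ℝ :=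
  phi F f v * F v ^ 2 / Gfun F f vhi v

/-- The posted price `ϑ (1 - k / F ϑ)` as a function of the cutoff `v = ϑ(k)`. -/
noncomputable def cutoffPrice (F f : ℝ → ℝ) (vhi v : ℝ) : ℝ :=
  v ^ 2 * (1 - F v) / Gfun F f vhi v

lemma cutoffCapacity_mem_Ioo (hd : HasPosDifferentiableDensityOn F f (Icc vlo vhi))
    (hFlo : F vlo = 0) (hFhi : F vhi = 1) (hv : v ∈ Ioo vlo vhi) (hφ : 0 < phi F f v) :
    cutoffCapacity F f vhi v ∈ Ioo 0 1 := by
  obtain ⟨hF0, hF1⟩ := cdf_mem_Ioo hd hFlo hFhi hv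
  have hv0 := pos_of_phi_pos hd hFlo hFhi hv hφ
  have hG := Gfun_pos hd hFlo hFhi hv hφ
  refine ⟨by unfold cutoffCapacity; positivity, ?_⟩
  rw [cutoffCapacity, div_lt_one hG, Gfun_eq hd hFhi (Ioo_subset_Icc_self hv)]
  nlinarith [mul_pos hφ hF0, mul_pos hv0 (sub_pos.2 hF1)]

lemma exists_hasDerivAt_cutoffCapacity_pos (hd : HasPosDifferentiableDensityOn F f (Icc vlo vhi))
    (hFlo : F vlo = 0) (hFhi : F vhi = 1) (hreg : StrictMonoOn (phi F f) (Icc vlo vhi))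
    (hv : v ∈ Ioo vlo vhi) (hφ : 0 < phi F f v) :
    ∃ κ' > 0, HasDerivAt (cutoffCapacity F f vhi) κ' v := by
  have hv' := Ioo_subset_Icc_self hv
  obtain ⟨hF0, hF1⟩ := cdf_mem_Ioo hd hFlo hFhi hv
  have hv0 := pos_of_phi_pos hd hFlo hFhi hv hφ
  have hf := hd.pos v hv'
  have hG := Gfun_pos hd hFlo hFhi hv hφ
  have hφ' : 0 ≤ deriv (phi F f) v := by
    rw [← derivWithin_of_mem_nhds (Icc_mem_nhds hv.1 hv.2)]
    exact hreg.monotoneOn.derivWithin_nonneg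
  have h1F : 0 ≤ v * (1 - F v) := mul_nonneg hv0.le (sub_pos.2 hF1).le
  refine ⟨(deriv (phi F f) v * F v ^ 2 * (v * (1 - F v)) +
      2 * phi F f v * F v * f v * Gfun F f vhi v) / Gfun F f vhi v ^ 2, by positivity, ?_⟩
  refine (((hd.differentiableAt_phi (Icc_mem_nhds hv.1 hv.2)).hasDerivAt.mul
    ((hd.hasDerivAt v hv').pow 2)).div (hasDerivAt_Gfun hd hFhi hv) hG.ne').congr_deriv ?_
  simp only [Pi.mul_apply, Pi.pow_apply]
  rw [Gfun_eq hd hFhi hv']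
  ring

lemma strictMonoOn_cutoffCapacity (hd : HasPosDifferentiableDensityOn F f (Icc vlo vhi))
    (hFlo : F vlo = 0) (hFhi : F vhi = 1) (hreg : StrictMonoOn (phi F f) (Icc vlo vhi))
    {vM : ℝ} (hvM : vlo ≤ vM) (hφ : ∀ v ∈ Ioo vM vhi, 0 < phi F f v) :
    StrictMonoOn (cutoffCapacity F f vhi) (Ioo vM vhi) := by
  have hsub : Ioo vM vhi ⊆ Ioo vlo vhi := Ioo_subset_Ioo_left hvM
  have hderiv (v) (hv : v ∈ Ioo vM vhi) :=
    exists_hasDerivAt_cutoffCapacity_pos hd hFlo hFhi hreg (hsub hv) (hφ v hv)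
  refine strictMonoOn_of_deriv_pos (convex_Ioo vM vhi) (fun v hv => ?_) (fun v hv => ?_)
  · obtain ⟨_, _, h⟩ := hderiv v hv
    exact h.continuousAt.continuousWithinAt
  · rw [interior_Ioo] at hv
    obtain ⟨_, hpos, h⟩ := hderiv v hv
    rwa [h.deriv]

lemma cutoffPrice_eq (hd : HasPosDifferentiableDensityOn F f (Icc vlo vhi)) (hFhi : F vhi = 1)
    (hv : v ∈ Icc vlo vhi) (hG : Gfun F f vhi v ≠ 0) :
    v * (1 - cutoffCapacity F f vhi v / F v) = cutoffPrice F f vhi v := by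
  rw [cutoffCapacity, cutoffPrice]
  field_simp
  rw [Gfun_eq hd hFhi hv]
  ring

lemma hasDerivAt_cutoffPrice (hd : HasPosDifferentiableDensityOn F f (Icc vlo vhi))
    (hFhi : F vhi = 1) (hv : v ∈ Ioo vlo vhi) (hG : Gfun F f vhi v ≠ 0) :
    HasDerivAt (cutoffPrice F f vhi)
      (((2 * v * (1 - F v) - v ^ 2 * f v) * Gfun F f vhi v -
        v ^ 2 * (1 - F v) * deriv (Gfun F f vhi) v) / Gfun F f vhi v ^ 2) v :=
  (((hasDerivAt_pow 2 v).mul ((hd.hasDerivAt v (Ioo_subset_Icc_self hv)).const_sub 1)).div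
    (hasDerivAt_Gfun hd hFhi hv).differentiableAt.hasDerivAt hG).congr_deriv
      (by simp only [Pi.mul_apply]; ring)

lemma cutoffPrice_deriv_nonpos_iff {v a b G G' : ℝ} (hv : 0 < v) (ha : a < 1) (hG : 0 < G) :
    ((2 * v * (1 - a) - v ^ 2 * b) * G - v ^ 2 * (1 - a) * G') / G ^ 2 ≤ 0 ↔
      v * b / (1 - a) + v * G' / G ≥ 2 := by
  have h1a : 0 < 1 - a := sub_pos.2 ha
  have hnum : (2 * v * (1 - a) - v ^ 2 * b) * G - v ^ 2 * (1 - a) * G' =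
      v * (2 * ((1 - a) * G) - (v * b * G + (1 - a) * (v * G'))) := by ring
  rw [div_nonpos_iff, hnum, ge_iff_le, div_add_div _ _ h1a.ne' hG.ne', le_div_iff₀ (by positivity)]
  constructor
  · rintro (⟨_, h⟩ | ⟨h, _⟩)
    · nlinarith [pow_pos hG 2]
    · nlinarith [mul_nonneg hv.le (sub_nonneg.2 h)]
  · intro h
    exact Or.inr ⟨by nlinarith, by positivity⟩

lemma deriv_cutoffPrice_nonpos_iff (hd : HasPosDifferentiableDensityOn F f (Icc vlo vhi))
    (hFlo : F vlo = 0) (hFhi : F vhi = 1) (hv : v ∈ Ioo vlo vhi) (hφ : 0 < phi F f v) :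
    deriv (cutoffPrice F f vhi) v ≤ 0 ↔
      v * f v / (1 - F v) + v * deriv (Gfun F f vhi) v / Gfun F f vhi v ≥ 2 := by
  have hG := Gfun_pos hd hFlo hFhi hv hφ
  rw [(hasDerivAt_cutoffPrice hd hFhi hv hG.ne').deriv]
  exact cutoffPrice_deriv_nonpos_iff (pos_of_phi_pos hd hFlo hFhi hv hφ)
    (cdf_mem_Ioo hd hFlo hFhi hv).2 hG

section Inverse

variable {vM : ℝ} {θ : ℝ → ℝ} {k : ℝ}

lemma exists_hasDerivAt_pos_of_leftInvOn_cutoffCapacity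
    (hd : HasPosDifferentiableDensityOn F f (Icc vlo vhi)) (hFlo : F vlo = 0) (hFhi : F vhi = 1)
    (hreg : StrictMonoOn (phi F f) (Icc vlo vhi)) (hvM : vlo ≤ vM)
    (hφ : ∀ v ∈ Ioo vM vhi, 0 < phi F f v) (hθ : MapsTo θ (Ioo 0 1) (Ioo vM vhi))
    (hinv : LeftInvOn (cutoffCapacity F f vhi) θ (Ioo 0 1)) (hk : k ∈ Ioo 0 1) :
    ∃ θ' > 0, HasDerivAt θ θ' k := by
  have hsub : Ioo vM vhi ⊆ Ioo vlo vhi := Ioo_subset_Ioo_left hvM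
  have hθcont : ContinuousAt θ k :=
    continuousAt_of_leftInvOn_of_strictMonoOn
      (strictMonoOn_cutoffCapacity hd hFlo hFhi hreg hvM hφ) hθ
      (fun v hv => cutoffCapacity_mem_Ioo hd hFlo hFhi (hsub hv) (hφ v hv)) hinv
      isOpen_Ioo isOpen_Ioo hk
  obtain ⟨κ', hκ'pos, hκ'⟩ := exists_hasDerivAt_cutoffCapacity_pos hd hFlo hFhi hreg
    (hsub (hθ hk)) (hφ _ (hθ hk))
  exact ⟨κ'⁻¹, inv_pos.2 hκ'pos, hκ'.of_local_left_inverse hθcont hκ'pos.ne'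
    (eventually_of_mem (isOpen_Ioo.mem_nhds hk) hinv)⟩

lemma hasDerivAt_price_of_leftInvOn_cutoffCapacity
    (hd : HasPosDifferentiableDensityOn F f (Icc vlo vhi)) (hFlo : F vlo = 0) (hFhi : F vhi = 1)
    (hvM : vlo ≤ vM) (hφ : ∀ v ∈ Ioo vM vhi, 0 < phi F f v)
    (hθ : MapsTo θ (Ioo 0 1) (Ioo vM vhi)) (hinv : LeftInvOn (cutoffCapacity F f vhi) θ (Ioo 0 1))
    (hk : k ∈ Ioo 0 1) {θ' : ℝ} (hθd : HasDerivAt θ θ' k) :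
    HasDerivAt (fun k' => θ k' * (1 - k' / F (θ k')))
      (deriv (cutoffPrice F f vhi) (θ k) * θ') k := by
  have hsub : Ioo vM vhi ⊆ Ioo vlo vhi := Ioo_subset_Ioo_left hvM
  have hG {k'} (hk' : k' ∈ Ioo (0:ℝ) 1) : Gfun F f vhi (θ k') ≠ 0 :=
    (Gfun_pos hd hFlo hFhi (hsub (hθ hk')) (hφ _ (hθ hk'))).ne'
  have hprice : (fun k' => θ k' * (1 - k' / F (θ k'))) =ᶠ[𝓝 k] cutoffPrice F f vhi ∘ θ := by
    filter_upwards [isOpen_Ioo.mem_nhds hk] with k' hk'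
    have := cutoffPrice_eq hd hFhi (Ioo_subset_Icc_self (hsub (hθ hk'))) (hG hk')
    rwa [hinv hk'] at this
  exact ((hasDerivAt_cutoffPrice hd hFhi (hsub (hθ hk)) (hG hk)).differentiableAt.hasDerivAt.comp
    k hθd).congr_of_eventuallyEq hprice

end Inverse

end

theorem stmt_16_general
    (vlo vhi : ℝ)
    (F f : ℝ → ℝ)
    (hFlo : F vlo = 0) (hFhi : F vhi = 1)
    (hFderiv : ∀ v ∈ Set.Icc vlo vhi, HasDerivAt F (f v) v)
    (hfpos : ∀ v ∈ Set.Icc vlo vhi, 0 < f v)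
    (hfdiff : DifferentiableOn ℝ f (Set.Icc vlo vhi))
    (hreg : StrictMonoOn (phi F f) (Set.Icc vlo vhi))
    (vM : ℝ) (hvM : IsLeast {v ∈ Set.Icc vlo vhi | 0 ≤ phi F f v} vM)
    (FInv : ℝ → ℝ)
    (θ : ℝ → ℝ)
    (hθ : ∀ k ∈ Set.Ioo (0:ℝ) 1, θ k ∈ Set.Icc vlo vhi ∧
      k * Gfun F f vhi (θ k) = phi F f (θ k) * (F (θ k)) ^ 2)
    (hθloc : ∀ k ∈ Set.Ioo (0:ℝ) 1, θ k ∈ Set.Ioo (max vM (FInv k)) vhi)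
    :
    (∀ k ∈ Set.Ioo (0:ℝ) 1, DifferentiableAt ℝ θ k) ∧
      (∀ k ∈ Set.Ioo (0:ℝ) 1,
        DifferentiableAt ℝ (fun k' => θ k' * (1 - k' / F (θ k'))) k) ∧
      (∀ k ∈ Set.Ioo (0:ℝ) 1,
        deriv (fun k' => θ k' * (1 - k' / F (θ k'))) k ≤ 0 ↔
          θ k * f (θ k) / (1 - F (θ k)) +
            θ k * deriv (Gfun F f vhi) (θ k) / Gfun F f vhi (θ k) ≥ 2) := by
  have hd : HasPosDifferentiableDensityOn F f (Icc vlo vhi) := ⟨hFderiv, hfpos, hfdiff⟩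
  have hvloM : vlo ≤ vM := hvM.1.1.1
  have hsub : Ioo vM vhi ⊆ Ioo vlo vhi := Ioo_subset_Ioo_left hvloM
  have hφ : ∀ v ∈ Ioo vM vhi, 0 < phi F f v := fun v hv =>
    hvM.1.2.trans_lt (hreg hvM.1.1 (Ioo_subset_Icc_self (hsub hv)) hv.1)
  have hθt : MapsTo θ (Ioo 0 1) (Ioo vM vhi) := fun k hk =>
    ⟨(le_max_left _ _).trans_lt (hθloc k hk).1, (hθloc k hk).2⟩
  have hinv : LeftInvOn (cutoffCapacity F f vhi) θ (Ioo 0 1) := fun k hk => by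
    have hG := Gfun_pos hd hFlo hFhi (hsub (hθt hk)) (hφ _ (hθt hk))
    rw [cutoffCapacity, ← (hθ k hk).2, mul_div_cancel_right₀ _ hG.ne']
  have hderiv (k) (hk : k ∈ Ioo (0:ℝ) 1) : ∃ θ' > 0, HasDerivAt θ θ' k ∧
      HasDerivAt (fun k' => θ k' * (1 - k' / F (θ k')))
        (deriv (cutoffPrice F f vhi) (θ k) * θ') k := by
    obtain ⟨θ', hθ'pos, hθd⟩ :=
      exists_hasDerivAt_pos_of_leftInvOn_cutoffCapacity hd hFlo hFhi hreg hvloM hφ hθt hinv hk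
    exact ⟨θ', hθ'pos, hθd,
      hasDerivAt_price_of_leftInvOn_cutoffCapacity hd hFlo hFhi hvloM hφ hθt hinv hk hθd⟩
  refine ⟨fun k hk => ?_, fun k hk => ?_, fun k hk => ?_⟩ <;>
    obtain ⟨θ', hθ'pos, hθd, hpd⟩ := hderiv k hk
  · exact hθd.differentiableAt
  · exact hpd.differentiableAt
  · rw [hpd.deriv, ← zero_mul θ', mul_le_mul_iff_of_pos_right hθ'pos]
    exact deriv_cutoffPrice_nonpos_iff hd hFlo hFhi (hsub (hθt hk)) (hφ _ (hθt hk))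

/-- the cutoff map `k ↦ ϑ(k)` is differentiable on `(0,1)`, hence so is
the posted price `p(k) = ϑ(k)·(1 − k/F(ϑ(k)))`; and for every `k ∈ (0,1)`, `p'(k) ≤ 0`
holds iff `ϑ(k)·f(ϑ(k))/(1 − F(ϑ(k))) + ϑ(k)·G'(ϑ(k))/G(ϑ(k)) ≥ 2`. -/
theorem stmt_16
    (vlo vhi : ℝ) (hvlo : 0 ≤ vlo) (hlt : vlo < vhi)
    (F f : ℝ → ℝ) (hFmono : Monotone F)
    (hFlo : F vlo = 0) (hFhi : F vhi = 1)
    (hFderiv : ∀ v ∈ Set.Icc vlo vhi, HasDerivAt F (f v) v)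
    (hfpos : ∀ v ∈ Set.Icc vlo vhi, 0 < f v)
    (hfdiff : DifferentiableOn ℝ f (Set.Icc vlo vhi))
    (hreg : StrictMonoOn (phi F f) (Set.Icc vlo vhi))
    (vM : ℝ) (hvM : IsLeast {v ∈ Set.Icc vlo vhi | 0 ≤ phi F f v} vM)
    (FInv : ℝ → ℝ)
    (hFInv : ∀ k ∈ Set.Ioo (0:ℝ) 1, FInv k ∈ Set.Icc vlo vhi ∧ F (FInv k) = k)
    (θ : ℝ → ℝ)
    (hθ : ∀ k ∈ Set.Ioo (0:ℝ) 1, θ k ∈ Set.Icc vlo vhi ∧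
      k * Gfun F f vhi (θ k) = phi F f (θ k) * (F (θ k)) ^ 2)
    (hθuniq : ∀ k ∈ Set.Ioo (0:ℝ) 1, ∀ v ∈ Set.Icc vlo vhi,
      k * Gfun F f vhi v = phi F f v * (F v) ^ 2 → v = θ k)
    (hθloc : ∀ k ∈ Set.Ioo (0:ℝ) 1, θ k ∈ Set.Ioo (max vM (FInv k)) vhi)
    :
    (∀ k ∈ Set.Ioo (0:ℝ) 1, DifferentiableAt ℝ θ k) ∧
      (∀ k ∈ Set.Ioo (0:ℝ) 1,
        DifferentiableAt ℝ (fun k' => θ k' * (1 - k' / F (θ k'))) k) ∧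
      (∀ k ∈ Set.Ioo (0:ℝ) 1,
        deriv (fun k' => θ k' * (1 - k' / F (θ k'))) k ≤ 0 ↔
          θ k * f (θ k) / (1 - F (θ k)) +
            θ k * deriv (Gfun F f vhi) (θ k) / Gfun F f vhi (θ k) ≥ 2) :=
  stmt_16_general vlo vhi F f hFlo hFhi hFderiv hfpos hfdiff hreg vM hvM FInv θ hθ hθloc
end

section
/- For every capacity k ∈ (0,1) and every type v ∈ V, the mixed-market consumer surplus dominates the public-option-only surplus: U(v,k) ≥ k·v; moreover the inequality is strict whenever v > 0. -/
open Set MeasureTheory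

/- Since `F⁻¹(k) < ϑ(k) < v̄` and `F` is strictly increasing, `k < F(ϑ(k)) < 1`, so the rationing
probability `π(k)` exceeds `k`. Types below `ϑ(k)` are served with probability `π(k) > k`, and a
type `v ≥ ϑ(k)` gains `(1 - k)(v - ϑ(k)) + ϑ(k)(π(k) - k) > 0` over `k·v`. -/

theorem strictMonoOn_of_hasDerivAt_pos {D : Set ℝ} (hD : Convex ℝ D) {f f' : ℝ → ℝ}
    (hf : ∀ x ∈ D, HasDerivAt f (f' x) x) (hf' : ∀ x ∈ D, 0 < f' x) : StrictMonoOn f D :=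
  strictMonoOn_of_hasDerivWithinAt_pos hD
    (fun x hx => (hf x hx).continuousAt.continuousWithinAt)
    (fun x hx => (hf x (interior_subset hx)).hasDerivWithinAt)
    (fun x hx => hf' x (interior_subset hx))

theorem mul_le_Ucs {F θ : ℝ → ℝ} {k v : ℝ} (hk : 0 < k) (hk1 : k < 1)
    (hF0 : 0 < F (θ k)) (hF1 : F (θ k) < 1) (hθ : 0 < θ k) (hv : 0 ≤ v) :
    k * v ≤ Ucs F θ v k ∧ (0 < v → k * v < Ucs F θ v k) := by
  have hπ : k < k / F (θ k) := by
    rw [lt_div_iff₀ hF0]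
    nlinarith
  unfold Ucs
  split_ifs with hvθ
  · exact ⟨by gcongr, fun hv0 => by gcongr⟩
  · have hgain : k * v < v - θ k * (1 - k / F (θ k)) := by
      nlinarith [mul_pos hθ (sub_pos.mpr hπ),
        mul_nonneg (sub_nonneg.mpr hk1.le) (sub_nonneg.mpr (not_lt.mp hvθ))]
    exact ⟨hgain.le, fun _ => hgain⟩

theorem stmt_18_general
    (vlo vhi : ℝ) (hvlo : 0 ≤ vlo)
    (F f : ℝ → ℝ)
    (hFhi : F vhi = 1)
    (hFderiv : ∀ v ∈ Set.Icc vlo vhi, HasDerivAt F (f v) v)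
    (hfpos : ∀ v ∈ Set.Icc vlo vhi, 0 < f v)
    (vM : ℝ)
    (FInv : ℝ → ℝ)
    (hFInv : ∀ k ∈ Set.Ioo (0:ℝ) 1, FInv k ∈ Set.Icc vlo vhi ∧ F (FInv k) = k)
    (θ : ℝ → ℝ)
    (hθloc : ∀ k ∈ Set.Ioo (0:ℝ) 1, θ k ∈ Set.Ioo (max vM (FInv k)) vhi)
    :
    ∀ k ∈ Set.Ioo (0:ℝ) 1, ∀ v ∈ Set.Icc vlo vhi,
      k * v ≤ Ucs F θ v k ∧ (0 < v → k * v < Ucs F θ v k) := by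
  intro k hk v hv
  have hFstrict := strictMonoOn_of_hasDerivAt_pos (convex_Icc vlo vhi) hFderiv hfpos
  obtain ⟨hFInv_mem, hFFInv⟩ := hFInv k hk
  obtain ⟨hθ_gt, hθ_lt⟩ := hθloc k hk
  have hFInv_lt : FInv k < θ k := (le_max_right _ _).trans_lt hθ_gt
  have hθ_mem : θ k ∈ Icc vlo vhi := ⟨hFInv_mem.1.trans hFInv_lt.le, hθ_lt.le⟩
  have hk_lt : k < F (θ k) := hFFInv.symm.trans_lt (hFstrict hFInv_mem hθ_mem hFInv_lt)
  have hF_lt : F (θ k) < 1 :=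
    (hFstrict hθ_mem ⟨hθ_mem.1.trans hθ_lt.le, le_rfl⟩ hθ_lt).trans_eq hFhi
  exact mul_le_Ucs hk.1 hk.2 (hk.1.trans hk_lt) hF_lt
    (hvlo.trans_lt (hFInv_mem.1.trans_lt hFInv_lt)) (hvlo.trans hv.1)

/-- for every `k ∈ (0,1)` and every `v ∈ V`, the mixed-market consumer
surplus dominates the public-option-only surplus: `U(v,k) ≥ k·v`, strictly if `v > 0`. -/
theorem stmt_18
    (vlo vhi : ℝ) (hvlo : 0 ≤ vlo) (hlt : vlo < vhi)
    (F f : ℝ → ℝ) (hFmono : Monotone F)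
    (hFlo : F vlo = 0) (hFhi : F vhi = 1)
    (hFderiv : ∀ v ∈ Set.Icc vlo vhi, HasDerivAt F (f v) v)
    (hfpos : ∀ v ∈ Set.Icc vlo vhi, 0 < f v)
    (hfdiff : DifferentiableOn ℝ f (Set.Icc vlo vhi))
    (hreg : StrictMonoOn (phi F f) (Set.Icc vlo vhi))
    (vM : ℝ) (hvM : IsLeast {v ∈ Set.Icc vlo vhi | 0 ≤ phi F f v} vM)
    (FInv : ℝ → ℝ)
    (hFInv : ∀ k ∈ Set.Ioo (0:ℝ) 1, FInv k ∈ Set.Icc vlo vhi ∧ F (FInv k) = k)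
    (θ : ℝ → ℝ)
    (hθ : ∀ k ∈ Set.Ioo (0:ℝ) 1, θ k ∈ Set.Icc vlo vhi ∧
      k * Gfun F f vhi (θ k) = phi F f (θ k) * (F (θ k)) ^ 2)
    (hθuniq : ∀ k ∈ Set.Ioo (0:ℝ) 1, ∀ v ∈ Set.Icc vlo vhi,
      k * Gfun F f vhi v = phi F f v * (F v) ^ 2 → v = θ k)
    (hθloc : ∀ k ∈ Set.Ioo (0:ℝ) 1, θ k ∈ Set.Ioo (max vM (FInv k)) vhi)
    :
    ∀ k ∈ Set.Ioo (0:ℝ) 1, ∀ v ∈ Set.Icc vlo vhi,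
      k * v ≤ Ucs F θ v k ∧ (0 < v → k * v < Ucs F θ v k) :=
  stmt_18_general vlo vhi hvlo F f hFhi hFderiv hfpos vM FInv hFInv θ hθloc
end
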